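/- Let a1 ≤ a2 and b1 ≤ b2 be real numbers with a1 ≤ b1, and define tij = min(ai, bj) for i,j ∈ {1,2}. Then c(t) = h(t−t11) − h(t−t12) − h(t−t21) + h(t−t22) ≤ 0 for all real t, where h is the Heaviside function. -/
import Mathlib


noncomputable def heaviside (x : ℝ) : ℝ := if 0 ≤ x then 1 else 0

lemma heaviside_mono : Monotone heaviside := by
  intro x y hxy
  unfold heaviside
  split_ifs with h1 h2 <;> simp_all <;> linarith

theorem stmt6 (a1 a2 b1 b2 : ℝ) (ha : a1 ≤ a2) (hb : b1 ≤ b2) (hab : a1 ≤ b1) :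
    ∀ t : ℝ,
      heaviside (t - min a1 b1) - heaviside (t - min a1 b2)
        - heaviside (t - min a2 b1) + heaviside (t - min a2 b2) ≤ 0 := by
  intro t
  rw [min_eq_left hab, min_eq_left (hab.trans hb)]
  have : heaviside (t - min a2 b2) ≤ heaviside (t - min a2 b1) := by
    apply heaviside_mono
    have : min a2 b1 ≤ min a2 b2 := min_le_min le_rfl hb
    linarith
  linarith
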